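/- arXiv:1201.5757 — 3 statements merged into one kernel-verified Lean document; each statement's English description precedes it below -/
import Mathlib

section
/- Let (w_n) be a sequence of words with w_{n+1} a concatenation of q_n ≥ 2 cyclic rotations of w_n, and h_n = |w_n|. Then the number of distinct subwords of w_{n+1} of length h_n is at most h_n^3 - h_n^2 + h_n. -/
/-- Cyclic rotation of a word by an integer number of positions. -/
def rho {α : Type*} (w : List α) (a : ℤ) : List α :=
  w.rotate (a % (w.length : ℤ)).toNat

/-!
A subword of length `h` of a concatenation of blocks of length `h` starts at some offset
`i < h` inside a block `x` and ends inside the next block `y`, so it equals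
`x.drop i ++ y.take i`. When all blocks are rotations of `w`, with `h = |w|`, there are `h`
such words for `i = 0` (the rotations themselves) and at most `h²` for each `0 < i < h`,
giving `h + (h - 1) h² = h³ - h² + h`.
-/

namespace List

variable {α : Type*}

theorem exists_eq_drop_append_take_of_prefix_drop_flatten {h : ℕ} (hh : 0 < h)
    {L : List (List α)} (hL : ∀ b ∈ L, b.length = h) {u : List α} (hu : u.length = h)
    {k : ℕ} (hpre : u <+: L.flatten.drop k) :
    ∃ i < h, ∃ x ∈ L, ∃ y ∈ L, u = x.drop i ++ y.take i := by
  induction L generalizing k with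
  | nil =>
    have : u = [] := by simpa using hpre
    simp [this] at hu
    omega
  | cons x L ih =>
    have hx : x.length = h := hL x mem_cons_self
    by_cases hk : k < h
    · have hu_take : u = x.drop k ++ L.flatten.take k := by
        rw [prefix_iff_eq_take, flatten_cons, drop_append_of_le_length (by omega),
          take_append, take_of_length_le (by simp [hu, hx])] at hpre
        simpa [hu, hx, Nat.sub_sub_self hk.le] using hpre
      rcases L with _ | ⟨y, L⟩
      · have : u.length = h - k := by simp [hu_take, hx]
        refine ⟨0, hh, x, mem_cons_self, x, mem_cons_self, ?_⟩
        simpa [show k = 0 by omega] using hu_take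
      · refine ⟨k, hk, x, mem_cons_self, y, by simp, ?_⟩
        rw [hu_take, flatten_cons, take_append_of_le_length (by simp [hL y (by simp)]; omega)]
    · have hdrop : (x :: L).flatten.drop k = L.flatten.drop (k - h) := by
        rw [flatten_cons, drop_append, drop_of_length_le (by omega), hx, nil_append]
      obtain ⟨i, hi, y, hy, z, hz, rfl⟩ :=
        ih (fun b hb => hL b (mem_cons_of_mem _ hb)) (hdrop ▸ hpre)
      exact ⟨i, hi, y, mem_cons_of_mem _ hy, z, mem_cons_of_mem _ hz, rfl⟩

theorem exists_eq_drop_append_take_of_infix_flatten {h : ℕ} (hh : 0 < h)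
    {L : List (List α)} (hL : ∀ b ∈ L, b.length = h) {u : List α} (hu : u.length = h)
    (hinf : u <:+: L.flatten) :
    ∃ i < h, ∃ x ∈ L, ∃ y ∈ L, u = x.drop i ++ y.take i := by
  obtain ⟨s, t, hst⟩ := hinf
  refine exists_eq_drop_append_take_of_prefix_drop_flatten hh hL hu (k := s.length) ?_
  rw [← hst, append_assoc, drop_left]
  exact prefix_append u t

end List

section Rotations

variable {α : Type*} [DecidableEq α]

theorem rho_mem_rotations (w : List α) (hw : w ≠ []) (a : ℤ) :
    rho w a ∈ (Finset.range w.length).image w.rotate := by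
  have hh : (0 : ℤ) < w.length := by exact_mod_cast List.length_pos_iff.mpr hw
  have := Int.emod_nonneg a hh.ne'
  have := Int.emod_lt_of_pos a hh
  exact Finset.mem_image.mpr ⟨_, Finset.mem_range.mpr (by omega), rfl⟩

def twoRotationWords (w : List α) : Finset (List α) :=
  (Finset.range w.length).image w.rotate ∪
    (Finset.Ioo 0 w.length ×ˢ Finset.range w.length ×ˢ Finset.range w.length).image
      fun p => (w.rotate p.2.1).drop p.1 ++ (w.rotate p.2.2).take p.1

theorem drop_append_take_mem_twoRotationWords {w x y : List α} {i : ℕ} (hi : i < w.length)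
    (hx : x ∈ (Finset.range w.length).image w.rotate)
    (hy : y ∈ (Finset.range w.length).image w.rotate) :
    x.drop i ++ y.take i ∈ twoRotationWords w := by
  obtain ⟨r, hr, rfl⟩ := Finset.mem_image.mp hx
  obtain ⟨s, hs, rfl⟩ := Finset.mem_image.mp hy
  rcases Nat.eq_zero_or_pos i with rfl | hipos
  · simpa [twoRotationWords] using Or.inl ⟨r, Finset.mem_range.mp hr, rfl⟩
  · refine Finset.mem_union_right _ (Finset.mem_image.mpr ⟨(i, r, s), ?_, rfl⟩)
    simp_all

theorem card_twoRotationWords_le (w : List α) :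
    (twoRotationWords w).card ≤ w.length ^ 3 - w.length ^ 2 + w.length := by
  calc (twoRotationWords w).card
      ≤ w.length + (w.length - 1) * (w.length * w.length) := by
        refine (Finset.card_union_le _ _).trans (add_le_add ?_ ?_) <;>
          refine Finset.card_image_le.trans ?_ <;> simp [Finset.card_product]
    _ = w.length ^ 3 - w.length ^ 2 + w.length := by
        rcases w.length with _ | n
        · rfl
        · rw [add_comm, show (n + 1) ^ 3 = n * ((n + 1) * (n + 1)) + (n + 1) ^ 2 by ring,
            Nat.add_sub_cancel, Nat.add_sub_cancel]

end Rotations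

theorem complexity_upper_bound_eq_general {α : Type*} (w : List α) (hw : w ≠ [])
    (q : ℕ) (a : Fin q → ℤ) (W : List α)
    (hW : W = (List.ofFn fun j => rho w (a j)).flatten) :
    {u : List α | u.length = w.length ∧ u <:+: W}.ncard
      ≤ w.length ^ 3 - w.length ^ 2 + w.length := by
  classical
  have hblocks : ∀ b ∈ List.ofFn fun j => rho w (a j),
      b ∈ (Finset.range w.length).image w.rotate := by
    intro b hb
    obtain ⟨j, rfl⟩ := List.mem_ofFn.mp hb
    exact rho_mem_rotations w hw (a j)
  have hsub : {u : List α | u.length = w.length ∧ u <:+: W} ⊆ twoRotationWords w := by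
    rintro u ⟨hu, hinf⟩
    have hlen : ∀ b ∈ List.ofFn fun j => rho w (a j), b.length = w.length := by
      intro b hb
      obtain ⟨r, -, rfl⟩ := Finset.mem_image.mp (hblocks b hb)
      exact List.length_rotate w r
    obtain ⟨i, hi, x, hx, y, hy, rfl⟩ := List.exists_eq_drop_append_take_of_infix_flatten
      (List.length_pos_iff.mpr hw) hlen hu (hW ▸ hinf)
    exact drop_append_take_mem_twoRotationWords hi (hblocks x hx) (hblocks y hy)
  calc _ ≤ (twoRotationWords w : Set (List α)).ncard :=
        Set.ncard_le_ncard hsub (Finset.finite_toSet _)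
    _ = (twoRotationWords w).card := Set.ncard_coe_finset _
    _ ≤ _ := card_twoRotationWords_le w

/-- If `W` is a concatenation of `q ≥ 2` cyclic rotations of a nonempty word `w`
of length `h`, then the number of distinct subwords of `W` of length `h` is at
most `h³ - h² + h`. -/
theorem complexity_upper_bound_eq {α : Type*} (w : List α) (hw : w ≠ [])
    (q : ℕ) (hq : 2 ≤ q) (a : Fin q → ℤ) (W : List α)
    (hW : W = (List.ofFn fun j => rho w (a j)).flatten) :
    {u : List α | u.length = w.length ∧ u <:+: W}.ncard
      ≤ w.length ^ 3 - w.length ^ 2 + w.length :=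
  complexity_upper_bound_eq_general w hw q a W hW
end

section
/- Let w be a word of length h such that any two equal subwords of cyclic rotations of w of length at least h/2 occupy identical positions (property D(1/2)). Let V(ξ, φ_1, φ_2) denote the word of length h obtained by taking the suffix of length ξ of ρ_{φ_1}(w) followed by the prefix of length h-ξ of ρ_{φ_2}(w). Suppose β h < ξ < η < (1-β)h, η - ξ > βh, and w satisfies property D(β). Then V(ξ,φ_1,φ_2) = V(η,ψ_1,ψ_2) if and only if η - ξ ≡ ψ_1 - φ_1 ≡ ψ_2 - φ_2 ≡ h + ψ_1 - φ_2 (mod h). -/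
/-- The subword of the cyclic rotation `ρ_φ(w)` starting at position `p` of length `m`. -/
def rotFactor {α : Type*} (w : List α) (φ p m : ℕ) : List α :=
  ((w.rotate φ).drop p).take m

/-- Property `D(β)`: any two equal subwords of cyclic rotations of `w` of length
at least `β·|w|` are identically located in `w`. -/
def PropD {α : Type*} (w : List α) (β : ℝ) : Prop :=
  ∀ φ ψ p q m : ℕ, β * w.length ≤ (m : ℝ) →
    p + m ≤ w.length → q + m ≤ w.length →
    rotFactor w φ p m = rotFactor w ψ q m →
    (φ + p) % w.length = (ψ + q) % w.length

/-- The word of length `h = |w|` formed by the suffix of length `ξ` of `ρ_{φ₁}(w)`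
followed by the prefix of length `h - ξ` of `ρ_{φ₂}(w)`. -/
def V {α : Type*} (w : List α) (ξ φ₁ φ₂ : ℕ) : List α :=
  (w.rotate φ₁).drop (w.length - ξ) ++ (w.rotate φ₂).take (w.length - ξ)

/-- Matching criterion for windows straddling two adjacent rotated blocks:
under property `D(β)` (and `D(1/2)`), with `βh < ξ < η < (1-β)h` and `η - ξ > βh`,
one has `V(ξ,φ₁,φ₂) = V(η,ψ₁,ψ₂)` iff
`η - ξ ≡ ψ₁ - φ₁ ≡ ψ₂ - φ₂ ≡ h + ψ₁ - φ₂ (mod h)`. -/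
theorem triple_matching_criterion {α : Type*} (w : List α) (β : ℝ) (hβ : 0 < β)
    (hD2 : PropD w (1 / 2)) (hDβ : PropD w β)
    (ξ η φ₁ φ₂ ψ₁ ψ₂ : ℕ)
    (h1 : β * w.length < (ξ : ℝ)) (h2 : ξ < η)
    (h3 : (η : ℝ) < (1 - β) * w.length)
    (h4 : β * w.length < (η : ℝ) - (ξ : ℝ)) :
    V w ξ φ₁ φ₂ = V w η ψ₁ ψ₂ ↔
      ((η : ℤ) - ξ ≡ (ψ₁ : ℤ) - φ₁ [ZMOD (w.length : ℤ)] ∧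
       (η : ℤ) - ξ ≡ (ψ₂ : ℤ) - φ₂ [ZMOD (w.length : ℤ)] ∧
       (η : ℤ) - ξ ≡ (w.length : ℤ) + ψ₁ - φ₂ [ZMOD (w.length : ℤ)]) := by

  have hlen : ∀ φ : ℕ, (w.rotate φ).length = w.length := fun φ => List.length_rotate w φ
  have hηh : η < w.length := by
    have h0 : (0 : ℝ) ≤ (w.length : ℝ) := Nat.cast_nonneg _
    have hc : (η : ℝ) < (w.length : ℝ) := by nlinarith
    exact_mod_cast hc
  have hξη : ξ ≤ η := h2.le
  have hξh : ξ ≤ w.length := le_of_lt (lt_of_lt_of_le h2 hηh.le)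
  have hm1 : β * w.length ≤ ((ξ : ℕ) : ℝ) := h1.le
  have hm2 : β * w.length ≤ ((η - ξ : ℕ) : ℝ) := by rw [Nat.cast_sub hξη]; exact h4.le
  have hm3 : β * w.length ≤ ((w.length - η : ℕ) : ℝ) := by
    rw [Nat.cast_sub hηh.le]; nlinarith
  have lA : (List.drop (w.length - ξ) (w.rotate φ₁)).length = ξ := by
    simp only [List.length_drop, hlen]; omega
  have lC : (List.drop (w.length - η) (w.rotate ψ₁)).length = η := by
    simp only [List.length_drop, hlen]; omega
  constructor
  · intro hV
    -- segment 1 : positions [0, ξ)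
    have s1L : (V w ξ φ₁ φ₂).take ξ = rotFactor w φ₁ (w.length - ξ) ξ := by
      unfold V rotFactor
      rw [List.take_append_of_le_length (by simp [hlen]; omega)]
    have s1R : (V w η ψ₁ ψ₂).take ξ = rotFactor w ψ₁ (w.length - η) ξ := by
      unfold V rotFactor
      rw [List.take_append_of_le_length (by simp [hlen]; omega)]
    have e1 : rotFactor w φ₁ (w.length - ξ) ξ = rotFactor w ψ₁ (w.length - η) ξ := by
      rw [← s1L, ← s1R, hV]
    have c1 := hDβ φ₁ ψ₁ (w.length - ξ) (w.length - η) ξ hm1 (by omega) (by omega) e1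
    -- segment 2 : positions [ξ, η)
    have s2L : ((V w ξ φ₁ φ₂).drop ξ).take (η - ξ) = rotFactor w φ₂ 0 (η - ξ) := by
      unfold V rotFactor
      rw [List.drop_append,
        List.drop_eq_nil_of_le (le_of_eq lA), lA, List.nil_append, Nat.sub_self,
        List.drop_zero, List.take_take, List.drop_zero,
        inf_eq_left.mpr (by omega : η - ξ ≤ w.length - ξ)]
    have s2R : ((V w η ψ₁ ψ₂).drop ξ).take (η - ξ) =
        rotFactor w ψ₁ (w.length - η + ξ) (η - ξ) := by
      unfold V rotFactor
      rw [List.drop_append,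
        List.take_append_of_le_length (by simp only [List.length_drop, hlen]; omega),
        List.drop_drop]
    have e2 : rotFactor w φ₂ 0 (η - ξ) = rotFactor w ψ₁ (w.length - η + ξ) (η - ξ) := by
      rw [← s2L, ← s2R, hV]
    have c2 := hDβ φ₂ ψ₁ 0 (w.length - η + ξ) (η - ξ) hm2 (by omega) (by omega) e2
    -- segment 3 : positions [η, h)
    have s3L : (V w ξ φ₁ φ₂).drop η = rotFactor w φ₂ (η - ξ) (w.length - η) := by
      unfold V rotFactor
      rw [List.drop_append,
        List.drop_eq_nil_of_le (lA.le.trans hξη), lA, List.drop_take]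
      rw [List.nil_append]
      congr 1
      omega
    have s3R : (V w η ψ₁ ψ₂).drop η = rotFactor w ψ₂ 0 (w.length - η) := by
      unfold V rotFactor
      rw [List.drop_append,
        List.drop_eq_nil_of_le (le_of_eq lC), lC, Nat.sub_self,
        List.nil_append, List.drop_zero, List.drop_zero]
    have e3 : rotFactor w φ₂ (η - ξ) (w.length - η) = rotFactor w ψ₂ 0 (w.length - η) := by
      rw [← s3L, ← s3R, hV]
    have c3 := hDβ φ₂ ψ₂ (η - ξ) 0 (w.length - η) hm3 (by omega) (by omega) e3
    have d1 : (w.length : ℤ) ∣ ((ψ₁ + (w.length - η) : ℕ) : ℤ) -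
        ((φ₁ + (w.length - ξ) : ℕ) : ℤ) := Nat.modEq_iff_dvd.mp c1
    have d2 : (w.length : ℤ) ∣ ((ψ₁ + (w.length - η + ξ) : ℕ) : ℤ) -
        ((φ₂ + 0 : ℕ) : ℤ) := Nat.modEq_iff_dvd.mp c2
    have d3 : (w.length : ℤ) ∣ ((ψ₂ + 0 : ℕ) : ℤ) -
        ((φ₂ + (η - ξ) : ℕ) : ℤ) := Nat.modEq_iff_dvd.mp c3
    refine ⟨Int.modEq_iff_dvd.mpr ?_, Int.modEq_iff_dvd.mpr ?_, Int.modEq_iff_dvd.mpr ?_⟩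
    · convert d1 using 1; omega
    · convert d3 using 1; omega
    · convert d2 using 1; omega
  · rintro ⟨g1, g2, g3⟩
    have dv1 : (w.length : ℤ) ∣ ((ψ₁ : ℤ) - φ₁) - ((η : ℤ) - ξ) := Int.modEq_iff_dvd.mp g1
    have dv2 : (w.length : ℤ) ∣ ((ψ₂ : ℤ) - φ₂) - ((η : ℤ) - ξ) := Int.modEq_iff_dvd.mp g2
    have dv3 : (w.length : ℤ) ∣ ((w.length : ℤ) + ψ₁ - φ₂) - ((η : ℤ) - ξ) :=
      Int.modEq_iff_dvd.mp g3
    obtain ⟨k, hk⟩ := dv1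
    obtain ⟨l, hl⟩ := dv2
    obtain ⟨m, hm⟩ := dv3
    have rφ : φ₁ % w.length = φ₂ % w.length := by
      refine Nat.modEq_iff_dvd.mpr ⟨k - m + 1, ?_⟩
      linear_combination hk - hm
    have rψ : ψ₁ % w.length = ψ₂ % w.length := by
      refine Nat.modEq_iff_dvd.mpr ⟨l - m + 1, ?_⟩
      linear_combination hl - hm
    have rot12 : w.rotate φ₂ = w.rotate φ₁ := by
      rw [← List.rotate_mod w φ₂, ← rφ, List.rotate_mod]
    have rot34 : w.rotate ψ₂ = w.rotate ψ₁ := by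
      rw [← List.rotate_mod w ψ₂, ← rψ, List.rotate_mod]
    have key : (φ₁ + (w.length - ξ)) % w.length = (ψ₁ + (w.length - η)) % w.length := by
      refine Nat.modEq_iff_dvd.mpr ⟨k, ?_⟩
      push_cast [Nat.cast_sub hξh, Nat.cast_sub hηh.le]
      linear_combination hk
    calc V w ξ φ₁ φ₂ = w.rotate (φ₁ + (w.length - ξ)) := by
          unfold V
          rw [rot12, ← List.rotate_eq_drop_append_take (by rw [hlen]; omega),
            List.rotate_rotate]
      _ = w.rotate (ψ₁ + (w.length - η)) := by
          rw [← List.rotate_mod w (φ₁ + (w.length - ξ)), key, List.rotate_mod]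
      _ = V w η ψ₁ ψ₂ := by
          unfold V
          rw [rot34, ← List.rotate_eq_drop_append_take (by rw [hlen]; omega),
            List.rotate_rotate]
end

section
/- Let w_{n+1} = ρ_{α(0)}(w_n) 0^{s_0} ρ_{α(1)}(w_n) 0^{s_1} ⋯ ρ_{α(q-1)}(w_n) 0^{s_{q-1}} be an iceberg word with spacers, h_n = |w_n|. Consider a subword v = u_1 0^s u_2 of length h_n+1 where u_1 is a suffix of ρ_{φ_1}(w_n), 0^s is a full spacer, and u_2 is a prefix of ρ_{φ_2}(w_n). Then for any ν ≥ 1, the word ṽ = ũ_1 0^{s+ν} u_2, where ũ_1 is the suffix of ρ_{φ_1 - ν}(w_n) of length |u_1| - ν, differs from v in at most ν letter positions (melting word effect). -/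
namespace List

variable {α : Type*}

theorem length_rho (w : List α) (a : ℤ) : (rho w a).length = w.length :=
  length_rotate ..

theorem rho_natCast (w : List α) (n : ℕ) : rho w n = w.rotate n := by
  rw [rho, ← rotate_mod w n]
  congr 1

theorem rotate_rho (w : List α) (a : ℤ) (n : ℕ) : (rho w a).rotate n = rho w (a + n) := by
  by_cases hw : w = []
  · simp [hw, rho]
  have hpos : (0 : ℤ) < w.length := by exact_mod_cast length_pos_iff.mpr hw
  unfold rho
  rw [rotate_rotate, ← rotate_mod, ← rotate_mod (n := ((a + n) % _).toNat)]
  congr 1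
  zify
  rw [Int.toNat_of_nonneg (Int.emod_nonneg _ hpos.ne'),
    Int.toNat_of_nonneg (Int.emod_nonneg _ hpos.ne'), Int.emod_emod_of_dvd _ dvd_rfl,
    Int.emod_add_emod]

theorem take_drop_rotate (l : List α) {ν k : ℕ} (hνk : ν ≤ k) (hk : k ≤ l.length) :
    ((l.rotate ν).drop (l.length - k)).take (k - ν) = l.drop (l.length - (k - ν)) := by
  rw [rotate_eq_drop_append_take (hνk.trans hk), drop_append_of_le_length (by simp; omega),
    drop_drop, take_append_of_le_length (by simp; omega), take_of_length_le (by simp; omega)]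
  congr 1
  omega

theorem drop_rho_sub (w : List α) (φ : ℕ) {ν k : ℕ} (hνk : ν ≤ k) (hk : k ≤ w.length) :
    (rho w ((φ : ℤ) - ν)).drop (w.length - (k - ν)) =
      ((w.rotate (φ % w.length)).drop (w.length - k)).take (k - ν) := by
  rw [rotate_mod, ← rho_natCast, ← sub_add_cancel (φ : ℤ) ν, ← rotate_rho,
    ← length_rho w (φ - ν), take_drop_rotate _ hνk (by rwa [length_rho]), add_sub_cancel_right]

theorem countP_bne_zip_self [BEq α] [LawfulBEq α] (l : List α) :
    (l.zip l).countP (fun p => p.1 != p.2) = 0 := by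
  induction l with
  | nil => rfl
  | cons a l ih => simp [ih]

theorem countP_bne_zip_append_le [BEq α] [LawfulBEq α] (l₁ l₂ l₂' l₃ : List α)
    (h : l₂.length = l₂'.length) :
    ((l₁ ++ l₂ ++ l₃).zip (l₁ ++ l₂' ++ l₃)).countP (fun p => p.1 != p.2) ≤ l₂.length := by
  rw [zip_append (by simpa), zip_append rfl, countP_append, countP_append,
    countP_bne_zip_self, countP_bne_zip_self]
  simpa [h] using countP_le_length (l := l₂.zip l₂')

end List

theorem melting_word_effect_general (w : List Bool) (φ₁ k s ν : ℕ)
    (hνk : ν ≤ k) (hk : k ≤ w.length)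
    (u₁ u₂ u₁t v vt : List Bool)
    (hu₁ : u₁ = (w.rotate (φ₁ % w.length)).drop (w.length - k))
    (hu₁t : u₁t = (rho w ((φ₁ : ℤ) - (ν : ℤ))).drop (w.length - (k - ν)))
    (hv : v = u₁ ++ List.replicate s false ++ u₂)
    (hvt : vt = u₁t ++ List.replicate (s + ν) false ++ u₂) :
    (v.zip vt).countP (fun p => p.1 != p.2) ≤ ν := by
  have hu₁t' : u₁t = u₁.take (k - ν) := by
    rw [hu₁t, hu₁, List.drop_rho_sub w φ₁ hνk hk]
  have hdrop : (u₁.drop (k - ν)).length = ν := by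
    simp [hu₁]; omega
  have hv' : v = u₁.take (k - ν) ++ u₁.drop (k - ν) ++ (List.replicate s false ++ u₂) := by
    rw [hv, List.take_append_drop, List.append_assoc]
  have hvt' :
      vt = u₁.take (k - ν) ++ List.replicate ν false ++ (List.replicate s false ++ u₂) := by
    rw [hvt, hu₁t', Nat.add_comm s ν, ← List.replicate_append_replicate]
    simp only [List.append_assoc]
  rw [hv', hvt']
  calc _ ≤ (u₁.drop (k - ν)).length :=
        List.countP_bne_zip_append_le _ _ _ _ (by rw [List.length_replicate, hdrop])
    _ = ν := hdrop

/-- Melting word effect. Let `v = u₁ 0^s u₂` be a word of length `h+1` where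
`u₁` is the suffix of length `k` of `ρ_{φ₁}(w)`, `0^s` is a spacer and `u₂` is
the prefix of length `h+1-k-s` of `ρ_{φ₂}(w)`. For `ν ≥ 1`, enlarging the
spacer to `0^{s+ν}` and replacing `u₁` by the suffix `u₁t` of length `k - ν` of
`ρ_{φ₁-ν}(w)` produces a word `vt = u₁t 0^{s+ν} u₂` differing from `v` in at most
`ν` letter positions (Hamming distance at most `ν`). -/
theorem melting_word_effect (w : List Bool) (φ₁ φ₂ k s ν : ℕ)
    (h0 : 0 < w.length) (hν1 : 1 ≤ ν) (hνk : ν ≤ k) (hk : k ≤ w.length)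
    (hks : k + s ≤ w.length + 1)
    (u₁ u₂ u₁t v vt : List Bool)
    (hu₁ : u₁ = (w.rotate (φ₁ % w.length)).drop (w.length - k))
    (hu₂ : u₂ = (w.rotate (φ₂ % w.length)).take (w.length + 1 - k - s))
    (hu₁t : u₁t = (rho w ((φ₁ : ℤ) - (ν : ℤ))).drop (w.length - (k - ν)))
    (hv : v = u₁ ++ List.replicate s false ++ u₂)
    (hvt : vt = u₁t ++ List.replicate (s + ν) false ++ u₂) :
    (v.zip vt).countP (fun p => p.1 != p.2) ≤ ν :=
  melting_word_effect_general w φ₁ k s ν hνk hk u₁ u₂ u₁t v vt hu₁ hu₁t hv hvt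
end
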